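/- Let γ ⊂ ℂ be a Jordan curve that is a k-quasicircle, and let f : γ → ℂ be continuous and injective. Suppose there is a constant C ≥ 1 such that for all x,y,z,w ∈ γ with z ≠ w: (1/C)·(|x−y|/|z−w|) ≤ |f(x)−f(y)|/|f(z)−f(w)| ≤ C·(|x−y|/|z−w|). Then f(γ) is a Jordan curve and f(γ) is a (C·k)-quasicircle. -/

import Mathlib

open Metric Set

noncomputable section

/-- The McMullen map `f_λ(z) = z^m + λ/z^l`. -/
def mcMullen (l m : ℕ) (lam : ℂ) (z : ℂ) : ℂ := z ^ m + lam / z ^ l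

/-- The "filled-in Julia set" `K_λ`: points whose forward orbit is defined
(never reaches `0`) and bounded. -/
def filledK (l m : ℕ) (lam : ℂ) : Set ℂ :=
  {z | (∀ n : ℕ, (mcMullen l m lam)^[n] z ≠ 0) ∧
    ∃ M : ℝ, ∀ n : ℕ, ‖(mcMullen l m lam)^[n] z‖ ≤ M}

/-- The trace on `ℂ` of the attracting basin of `∞`. -/
def basinA (l m : ℕ) (lam : ℂ) : Set ℂ := (filledK l m lam)ᶜ

/-- The Julia set `J_λ = ∂A_λ`. -/
def juliaJ (l m : ℕ) (lam : ℂ) : Set ℂ := frontier (basinA l m lam)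

/-- The free critical points of `f_λ`: the `l+m` solutions of `ω^(l+m) = λl/m`. -/
def freeCrit (l m : ℕ) (lam : ℂ) : Set ℂ := {w | w ^ (l + m) = lam * l / m}

/-- `B_λ`: the (unique) unbounded connected component of `A_λ`, realized as the set of
points of `A_λ` whose connected component in `A_λ` is unbounded. -/
def basinB (l m : ℕ) (lam : ℂ) : Set ℂ :=
  {z | z ∈ basinA l m lam ∧ ¬ Bornology.IsBounded (connectedComponentIn (basinA l m lam) z)}

/-- `T_λ`: the connected component of `A_λ` containing `0`. -/
def basinT (l m : ℕ) (lam : ℂ) : Set ℂ := connectedComponentIn (basinA l m lam) 0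

/-- Two metric spaces are quasisymmetrically equivalent: there is a homeomorphism `h`
and a homeomorphic distortion control `η : [0,∞) → [0,∞)` with
`d(h x, h y) ≤ η(d(x,y)/d(x,z)) * d(h x, h z)` for all `x ≠ z`. -/
def QSEquiv (X Y : Type*) [MetricSpace X] [MetricSpace Y] : Prop :=
  ∃ (h : X ≃ₜ Y) (η : NNReal ≃ₜ NNReal), ∀ x y z : X, x ≠ z →
    nndist (h x) (h y) ≤ η (nndist x y / nndist x z) * nndist (h x) (h z)

/-- The sets `I_n` in the construction of the standard Cantor set `C_{l,m}`. -/
def cantorPre (l m : ℕ) : ℕ → Set ℝ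
  | 0 => Icc 0 1
  | n + 1 => (fun x : ℝ => (1 - x) / (l : ℝ)) '' cantorPre l m n ∪
      (fun x : ℝ => 1 + (x - 1) / (m : ℝ)) '' cantorPre l m n

/-- The standard Cantor set `C_{l,m}`. -/
def stdCantorSet (l m : ℕ) : Set ℝ := ⋂ n, cantorPre l m n

/-- The standard Cantor circles `A_{l,m} = C_{l,m} × S¹`, with the product metric. -/
abbrev cantorCircles (l m : ℕ) := ↥(stdCantorSet l m) × ↥(sphere (0 : ℂ) 1)

/-- A Jordan curve in `ℂ`: a homeomorphic image of the unit circle. -/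
def IsJordanCurve (Γ : Set ℂ) : Prop := Nonempty (↥(sphere (0 : ℂ) 1) ≃ₜ ↥Γ)

/-- A `k`-quasicircle: a Jordan curve such that for any two distinct points `x, y` on it,
at least one of the connected components of `Γ \ {x, y}` has diameter at most `k * dist x y`. -/
def IsQuasicircle (k : ℝ) (Γ : Set ℂ) : Prop :=
  IsJordanCurve Γ ∧ ∀ x ∈ Γ, ∀ y ∈ Γ, x ≠ y →
    ∃ z ∈ Γ \ {x, y}, diam (connectedComponentIn (Γ \ {x, y}) z) ≤ k * dist x y

/-- A Sierpiński carpet in `ℂ`. -/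
def IsSierpinskiCarpet (S : Set ℂ) : Prop :=
  IsCompact S ∧ IsConnected S ∧ LocallyConnectedSpace S ∧ interior S = ∅ ∧
  (∀ z ∈ Sᶜ, IsJordanCurve (frontier (connectedComponentIn Sᶜ z))) ∧
  (∀ z ∈ Sᶜ, ∀ w ∈ Sᶜ, connectedComponentIn Sᶜ z ≠ connectedComponentIn Sᶜ w →
    frontier (connectedComponentIn Sᶜ z) ∩ frontier (connectedComponentIn Sᶜ w) = ∅) ∧
  ∀ ε : ℝ, 0 < ε →
    {C : Set ℂ | (∃ z ∈ Sᶜ, C = connectedComponentIn Sᶜ z) ∧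
      ε < diam (frontier C)}.Finite

/-- A round Sierpiński carpet: all peripheral circles are Euclidean circles. -/
def IsRoundCarpet (S : Set ℂ) : Prop :=
  IsSierpinskiCarpet S ∧
  ∀ z ∈ Sᶜ, ∃ (c : ℂ) (r : ℝ), 0 < r ∧ frontier (connectedComponentIn Sᶜ z) = sphere c r

/-- `λ₀`: supremum of the positive real parameters in the McMullen domain
(where `J_λ` is a Cantor set of circles). -/
def mcMullenLam0 (l m : ℕ) : ℝ :=
  sSup {t : ℝ | 0 < t ∧ Nonempty (↥(juliaJ l m (t : ℂ)) ≃ₜ cantorCircles 3 3)}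

/-- `λ₁`: infimum of the positive real parameters in the Cantor locus
(where `J_λ` is a Cantor set). -/
def mcMullenLam1 (l m : ℕ) : ℝ :=
  sInf {t : ℝ | 0 < t ∧ Nonempty (↥(juliaJ l m (t : ℂ)) ≃ₜ ↥(stdCantorSet 3 3))}

/-! On the compact curve `γ` the continuous injective map `f` is a homeomorphism onto
its image, so it carries `γ` to a Jordan curve and the components of `γ \ {x, y}` onto those of
`f(γ) \ {f x, f y}`. The ratio bound with `(z, w) = (x, y)` gives
`|f a - f b| ≤ C (|a - b| / |x - y|) |f x - f y|`, so the image of a component of diameter at most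
`k |x - y|` has diameter at most `C k |f x - f y|`. -/

section InverseOnCompact

variable {X Y : Type*} [TopologicalSpace X] [TopologicalSpace Y]

theorem IsCompact.continuousOn_invFunOn [Nonempty X] [T2Space Y] {f : X → Y} {s : Set X}
    (hs : IsCompact s) (hf : ContinuousOn f s) (hinj : InjOn f s) :
    ContinuousOn (Function.invFunOn f s) (f '' s) := by
  rw [continuousOn_iff_isClosed]
  intro t ht
  refine ⟨f '' (s ∩ t), ((hs.inter_right ht).image_of_continuousOn
    (hf.mono inter_subset_left)).isClosed, ?_⟩
  ext w
  constructor
  · rintro ⟨hwt, a, ha, rfl⟩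
    rw [mem_preimage, hinj.leftInvOn_invFunOn ha] at hwt
    exact ⟨⟨a, ⟨ha, hwt⟩, rfl⟩, mem_image_of_mem f ha⟩
  · rintro ⟨⟨a, ⟨ha, hat⟩, rfl⟩, -⟩
    exact ⟨by rwa [mem_preimage, hinj.leftInvOn_invFunOn ha], mem_image_of_mem f ha⟩

theorem Set.LeftInvOn.image_connectedComponentIn {f : X → Y} {g : Y → X} {s : Set X} {a : X}
    (hgf : LeftInvOn g f s) (hf : ContinuousOn f s) (hg : ContinuousOn g (f '' s)) (ha : a ∈ s) :
    f '' connectedComponentIn s a = connectedComponentIn (f '' s) (f a) := by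
  refine (hf.image_connectedComponentIn_subset ha).antisymm fun w hw => ?_
  have hgw := hg.image_connectedComponentIn_subset (mem_image_of_mem f ha) (mem_image_of_mem g hw)
  rw [hgf.image_image, hgf ha] at hgw
  obtain ⟨b, hb, rfl⟩ := connectedComponentIn_subset _ _ hw
  exact ⟨b, by rwa [hgf hb] at hgw, rfl⟩

end InverseOnCompact

theorem IsJordanCurve.isCompact {Γ : Set ℂ} (hΓ : IsJordanCurve Γ) : IsCompact Γ := by
  obtain ⟨e⟩ := hΓ
  have := isCompact_iff_compactSpace.mp (isCompact_sphere (0 : ℂ) 1)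
  exact isCompact_iff_compactSpace.mpr e.compactSpace

theorem IsJordanCurve.image {Γ : Set ℂ} {f : ℂ → ℂ} (hΓ : IsJordanCurve Γ)
    (hf : ContinuousOn f Γ) (hinj : InjOn f Γ) : IsJordanCurve (f '' Γ) := by
  have := isCompact_iff_compactSpace.mp hΓ.isCompact
  obtain ⟨e⟩ := hΓ
  exact ⟨e.trans <| (hf.mapsToRestrict (mapsTo_image f Γ)).homeoOfEquivCompactToT2
    (f := Equiv.Set.imageOfInjOn f Γ hinj)⟩

theorem IsQuasicircle.image {k L : ℝ} {γ : Set ℂ} {f : ℂ → ℂ} (hγ : IsQuasicircle k γ)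
    (hf : ContinuousOn f γ) (hinj : InjOn f γ)
    (hL : ∀ a ∈ γ, ∀ b ∈ γ, ∀ x ∈ γ, ∀ y ∈ γ, x ≠ y →
      dist (f a) (f b) / dist (f x) (f y) ≤ L * (dist a b / dist x y)) :
    IsQuasicircle (L * k) (f '' γ) := by
  refine ⟨hγ.1.image hf hinj, ?_⟩
  rintro _ ⟨x, hx, rfl⟩ _ ⟨y, hy, rfl⟩ hfxy
  have hxy : x ≠ y := ne_of_apply_ne f hfxy
  obtain ⟨z, hz, hK⟩ := hγ.2 x hx y hy hxy
  have hdxy : 0 < dist x y := dist_pos.mpr hxy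
  have hdfxy : 0 < dist (f x) (f y) := dist_pos.mpr hfxy
  have hL1 : 1 ≤ L := by
    simpa [div_self hdxy.ne', div_self hdfxy.ne'] using hL x hx y hy x hx y hy hxy
  have himage : f '' (γ \ {x, y}) = f '' γ \ {f x, f y} := by
    rw [hinj.image_sdiff_subset (insert_subset hx (singleton_subset_iff.mpr hy)),
      image_insert_eq, image_singleton]
  have hcomp : f '' connectedComponentIn (γ \ {x, y}) z =
      connectedComponentIn (f '' γ \ {f x, f y}) (f z) := by
    rw [← himage]
    exact (hinj.leftInvOn_invFunOn.mono sdiff_subset).image_connectedComponentIn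
      (hf.mono sdiff_subset)
      ((hγ.1.isCompact.continuousOn_invFunOn hf hinj).mono (image_mono sdiff_subset)) hz
  refine ⟨f z, himage ▸ mem_image_of_mem f hz, ?_⟩
  rw [← hcomp]
  have hbdd : Bornology.IsBounded (connectedComponentIn (γ \ {x, y}) z) :=
    hγ.1.isCompact.isBounded.subset ((connectedComponentIn_subset _ _).trans sdiff_subset)
  refine diam_le_of_forall_dist_le_of_nonempty
    ⟨f z, mem_image_of_mem f (mem_connectedComponentIn hz)⟩ ?_
  rintro _ ⟨a, ha, rfl⟩ _ ⟨b, hb, rfl⟩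
  have hab : dist a b / dist x y ≤ k :=
    (div_le_iff₀ hdxy).mpr ((dist_le_diam_of_mem hbdd ha hb).trans hK)
  have haγ := (connectedComponentIn_subset _ _ ha).1
  have hbγ := (connectedComponentIn_subset _ _ hb).1
  calc dist (f a) (f b) ≤ L * (dist a b / dist x y) * dist (f x) (f y) :=
        (div_le_iff₀ hdfxy).mp (hL a haγ b hbγ x hx y hy hxy)
    _ ≤ L * k * dist (f x) (f y) := by gcongr

theorem stmt4_general (k : ℝ) (γ : Set ℂ) (hγ : IsQuasicircle k γ)
    (C : ℝ) (f : ℂ → ℂ)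
    (hcont : ContinuousOn f γ) (hinj : InjOn f γ)
    (hdist : ∀ x ∈ γ, ∀ y ∈ γ, ∀ z ∈ γ, ∀ w ∈ γ, z ≠ w →
      (1 / C) * (dist x y / dist z w) ≤ dist (f x) (f y) / dist (f z) (f w) ∧
      dist (f x) (f y) / dist (f z) (f w) ≤ C * (dist x y / dist z w)) :
    IsJordanCurve (f '' γ) ∧ IsQuasicircle (C * k) (f '' γ) :=
  ⟨hγ.1.image hcont hinj,
    hγ.image hcont hinj fun a ha b hb x hx y hy hxy => (hdist a ha b hb x hx y hy hxy).2⟩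

/-- If `γ` is a `k`-quasicircle and `f` is continuous and injective on `γ`
with two-sided distortion bound `C` on ratios of distances, then `f(γ)` is a Jordan curve
and a `C·k`-quasicircle. -/
theorem stmt4 (k : ℝ) (hk : 1 ≤ k) (γ : Set ℂ) (hγ : IsQuasicircle k γ)
    (C : ℝ) (hC : 1 ≤ C) (f : ℂ → ℂ)
    (hcont : ContinuousOn f γ) (hinj : InjOn f γ)
    (hdist : ∀ x ∈ γ, ∀ y ∈ γ, ∀ z ∈ γ, ∀ w ∈ γ, z ≠ w →
      (1 / C) * (dist x y / dist z w) ≤ dist (f x) (f y) / dist (f z) (f w) ∧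
      dist (f x) (f y) / dist (f z) (f w) ≤ C * (dist x y / dist z w)) :
    IsJordanCurve (f '' γ) ∧ IsQuasicircle (C * k) (f '' γ) :=
  stmt4_general k γ hγ C f hcont hinj hdist

end
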